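/- arXiv:1502.04874 — 4 statements merged into one kernel-verified Lean document; each statement's English description precedes it below -/
import Mathlib

section
/- For any admissible sequential strategy in the d-armed stochastic bandit problem with Bernoulli rewards, after n plays the expected regret and the pseudo-regret satisfy 0 ≤ E[Rₙ] − R̄ₙ ≤ √(n·log(d)/2). -/
open MeasureTheory ProbabilityTheory Real Filter

noncomputable section

/-- An admissible sequential strategy for the `d`-armed stochastic bandit problem
with Bernoulli rewards.  `A k j` is the (0/1-valued) Bernoulli(p j) reward of arm `j`
at play `k`, the rewards being mutually independent; `I k` is the arm selected at
play `k`.  Admissibility: `I k` is measurable for a filtration `F` (past plays, past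
observed rewards and independent auxiliary randomness) such that `F k` is independent
of the rewards from time `k` on, and the observed reward at play `k` is
`F (k+1)`-measurable. -/
structure Bandit (d : ℕ) (Ω : Type) [mΩ : MeasurableSpace Ω] where
  μ : Measure Ω
  prob : IsProbabilityMeasure μ
  p : Fin d → ℝ
  hp : ∀ j, p j ∈ Set.Icc (0:ℝ) 1
  A : ℕ → Fin d → Ω → ℝ
  I : ℕ → Ω → Fin d
  F : Filtration ℕ mΩ
  hAmeas : ∀ n j, Measurable (A n j)
  hAval : ∀ n j ω, A n j ω = 0 ∨ A n j ω = 1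
  hAlaw : ∀ n j, μ {ω | A n j ω = 1} = ENNReal.ofReal (p j)
  hIndep : iIndepFun (m := fun _ : ℕ × Fin d => (inferInstance : MeasurableSpace ℝ))
      (fun k => A k.1 k.2) μ
  hImeas : ∀ n, Measurable[F n] (I n)
  hObs : ∀ n, Measurable[F (n+1)] (fun ω => A n (I n ω) ω)
  hIndepFuture : ∀ n, Indep (F n)
      (⨆ (m : ℕ) (_ : n ≤ m) (j : Fin d), MeasurableSpace.comap (A m j) inferInstance) μ

/-- The regret after `n` plays: `Rₙ = max_j ∑_{k=1}^n (A_k^j - A_k^{I_k})`. -/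
def Bandit.regret {d : ℕ} {Ω : Type} [MeasurableSpace Ω] (S : Bandit d Ω)
    (n : ℕ) (ω : Ω) : ℝ :=
  ⨆ j : Fin d, ∑ k ∈ Finset.range n, (S.A k j ω - S.A k (S.I k ω) ω)

/-- The pseudo-regret after `n` plays: `R̄ₙ = max_j E[∑_{k=1}^n (A_k^j - A_k^{I_k})]`. -/
def Bandit.pseudoRegret {d : ℕ} {Ω : Type} [MeasurableSpace Ω] (S : Bandit d Ω)
    (n : ℕ) : ℝ :=
  ⨆ j : Fin d, ∫ ω, (∑ k ∈ Finset.range n, (S.A k j ω - S.A k (S.I k ω) ω)) ∂S.μ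

/-!
With `Yⱼ = ∑ₖ Aₖʲ` and `W = ∑ₖ Aₖ^{Iₖ}`, the regret is `maxⱼ (Yⱼ - W)` and the pseudo-regret is
`maxⱼ E[Yⱼ] - E[W]`, so `E[Rₙ] - R̄ₙ ≤ E[maxⱼ (Yⱼ - E[Yⱼ])]`, in which the strategy no longer
appears. By Hoeffding's lemma each `Yⱼ - E[Yⱼ]`, a sum of `n` independent centred variables with
values in intervals of length `1`, is sub-Gaussian with variance proxy `n/4`. For `d` variables
`Zⱼ` sub-Gaussian with proxy `c`, Jensen's inequality applied to `exp (t · maxⱼ Zⱼ) ≤ ∑ⱼ exp (t Zⱼ)`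
gives `t · E[maxⱼ Zⱼ] ≤ log d + c t² / 2` for every `t > 0`, and optimising in `t` gives
`E[maxⱼ Zⱼ] ≤ √(2 c log d)`.
-/

open scoped NNReal

lemma le_sqrt_of_forall_mul_le {x a b : ℝ} (ha : 0 ≤ a) (hb : 0 ≤ b)
    (h : ∀ t > 0, t * x ≤ a + b * t ^ 2 / 2) : x ≤ √(2 * a * b) := by
  by_contra! hx
  have hx0 : 0 < x := (Real.sqrt_nonneg _).trans_lt hx
  have hx2 : 2 * a * b < x ^ 2 := by
    simpa [Real.sq_sqrt (by positivity : (0:ℝ) ≤ 2 * a * b)] using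
      pow_lt_pow_left₀ hx (Real.sqrt_nonneg _) two_ne_zero
  rcases hb.eq_or_lt with rfl | hb
  · have := h ((a + 1) / x) (by positivity)
    rw [div_mul_cancel₀ _ hx0.ne'] at this
    linarith
  · have := h (x / b) (by positivity)
    field_simp at this
    nlinarith

section FiniteMaximum

variable {Ω ι : Type*} {mΩ : MeasurableSpace Ω} {μ : Measure Ω} [Fintype ι] [Nonempty ι]

lemma abs_iSup_le_sum_abs (f : ι → ℝ) : |⨆ i, f i| ≤ ∑ i, |f i| := by
  obtain ⟨i, hi⟩ := exists_eq_ciSup_of_finite (f := f)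
  rw [← hi]
  exact Finset.single_le_sum (f := fun i => |f i|) (fun _ _ => abs_nonneg _) (Finset.mem_univ i)

lemma integrable_iSup {X : ι → Ω → ℝ} (hX : ∀ i, Integrable (X i) μ) :
    Integrable (fun ω => ⨆ i, X i ω) μ :=
  (integrable_finsetSum _ fun i _ => (hX i).abs).mono'
    (AEMeasurable.iSup fun i => (hX i).aemeasurable).aestronglyMeasurable
    (ae_of_all _ fun ω => by simpa using abs_iSup_le_sum_abs fun i => X i ω)

lemma iSup_integral_le_integral_iSup {X : ι → Ω → ℝ} (hX : ∀ i, Integrable (X i) μ) :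
    ⨆ i, ∫ ω, X i ω ∂μ ≤ ∫ ω, ⨆ i, X i ω ∂μ :=
  ciSup_le fun i => integral_mono (hX i) (integrable_iSup hX) fun ω =>
    le_ciSup (f := fun i => X i ω) (Finite.bddAbove_range _) i

lemma integral_iSup_sub_le_add_iSup_integral [IsProbabilityMeasure μ] {Y : ι → Ω → ℝ} {W : Ω → ℝ}
    (hY : ∀ i, Integrable (Y i) μ) (hW : Integrable W μ) :
    ∫ ω, ⨆ i, (Y i ω - W ω) ∂μ
      ≤ ∫ ω, ⨆ i, (Y i ω - ∫ ω', Y i ω' ∂μ) ∂μ + ⨆ i, ∫ ω, (Y i ω - W ω) ∂μ := by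
  set P := ⨆ i, ∫ ω, (Y i ω - W ω) ∂μ
  have hcentred : Integrable (fun ω => ⨆ i, (Y i ω - ∫ ω', Y i ω' ∂μ)) μ :=
    integrable_iSup fun i => (hY i).sub (integrable_const _)
  have hpointwise : ∀ ω, ⨆ i, (Y i ω - W ω)
      ≤ (⨆ i, (Y i ω - ∫ ω', Y i ω' ∂μ)) + P + (∫ ω', W ω' ∂μ - W ω) := fun ω =>
    ciSup_le fun i => by
      have hmean : ∫ ω', (Y i ω' - W ω') ∂μ ≤ P :=
        le_ciSup (f := fun i => ∫ ω', (Y i ω' - W ω') ∂μ) (Finite.bddAbove_range _) i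
      have hle : Y i ω - ∫ ω', Y i ω' ∂μ ≤ ⨆ i, (Y i ω - ∫ ω', Y i ω' ∂μ) :=
        le_ciSup (f := fun i => Y i ω - ∫ ω', Y i ω' ∂μ) (Finite.bddAbove_range _) i
      rw [integral_sub (hY i) hW] at hmean
      linarith
  have hbound : Integrable (fun ω => (⨆ i, (Y i ω - ∫ ω', Y i ω' ∂μ)) + P) μ :=
    hcentred.fun_add (integrable_const P)
  have hW_centred : Integrable (fun ω => ∫ ω', W ω' ∂μ - W ω) μ := (integrable_const _).sub' hW
  calc ∫ ω, ⨆ i, (Y i ω - W ω) ∂μ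
      ≤ ∫ ω, ((⨆ i, (Y i ω - ∫ ω', Y i ω' ∂μ)) + P + (∫ ω', W ω' ∂μ - W ω)) ∂μ :=
        integral_mono (integrable_iSup fun i => (hY i).sub hW) (hbound.fun_add hW_centred)
          hpointwise
    _ = ∫ ω, ⨆ i, (Y i ω - ∫ ω', Y i ω' ∂μ) ∂μ + P := by
        rw [integral_add hbound hW_centred, integral_add hcentred (integrable_const P),
          integral_sub (integrable_const _) hW]
        simp

lemma integral_iSup_le_of_hasSubgaussianMGF [IsProbabilityMeasure μ] {Z : ι → Ω → ℝ} {c : ℝ≥0}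
    (hZ : ∀ i, HasSubgaussianMGF (Z i) c μ) :
    ∫ ω, ⨆ i, Z i ω ∂μ ≤ √(2 * Real.log (Fintype.card ι) * c) := by
  refine le_sqrt_of_forall_mul_le (Real.log_natCast_nonneg _) c.2 fun t ht => ?_
  have hsum : Integrable (fun ω => ∑ i, exp (t * Z i ω)) μ :=
    integrable_finsetSum _ fun i _ => (hZ i).integrable_exp_mul t
  have hmax : Integrable (fun ω => ⨆ i, Z i ω) μ := integrable_iSup fun i => (hZ i).integrable
  have hexp_max_le : ∀ ω, exp (t * ⨆ i, Z i ω) ≤ ∑ i, exp (t * Z i ω) := fun ω => by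
    obtain ⟨i, hi⟩ := exists_eq_ciSup_of_finite (f := fun i => Z i ω)
    rw [← hi]
    exact Finset.single_le_sum (f := fun i => exp (t * Z i ω)) (fun _ _ => (exp_pos _).le)
      (Finset.mem_univ i)
  have hexp_max : Integrable (fun ω => exp (t * ⨆ i, Z i ω)) μ :=
    hsum.mono' (continuous_exp.comp_aestronglyMeasurable (hmax.const_mul t).1)
      (ae_of_all _ fun ω => by simpa [abs_of_pos (exp_pos _)] using hexp_max_le ω)
  have hjensen : exp (t * ∫ ω, ⨆ i, Z i ω ∂μ) ≤ Fintype.card ι * exp (c * t ^ 2 / 2) :=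
    calc exp (t * ∫ ω, ⨆ i, Z i ω ∂μ)
        = exp (∫ ω, t * ⨆ i, Z i ω ∂μ) := by rw [integral_const_mul]
      _ ≤ ∫ ω, exp (t * ⨆ i, Z i ω) ∂μ :=
        convexOn_exp.map_integral_le continuousOn_exp isClosed_univ
          (ae_of_all _ fun _ => Set.mem_univ _) (hmax.const_mul t) hexp_max
      _ ≤ ∫ ω, ∑ i, exp (t * Z i ω) ∂μ := integral_mono hexp_max hsum hexp_max_le
      _ = ∑ i, mgf (Z i) μ t := integral_finsetSum _ fun i _ => (hZ i).integrable_exp_mul t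
      _ ≤ ∑ _i : ι, exp (c * t ^ 2 / 2) := Finset.sum_le_sum fun i _ => (hZ i).mgf_le t
      _ = Fintype.card ι * exp (c * t ^ 2 / 2) := by simp
  have hcard : (0 : ℝ) < Fintype.card ι := by exact_mod_cast Fintype.card_pos
  have := Real.log_le_log (exp_pos _) hjensen
  rwa [Real.log_exp, Real.log_mul hcard.ne' (exp_pos _).ne', Real.log_exp] at this

end FiniteMaximum

namespace Bandit

variable {d : ℕ} {Ω : Type} [MeasurableSpace Ω] (S : Bandit d Ω)

lemma A_mem_Icc (k : ℕ) (j : Fin d) (ω : Ω) : S.A k j ω ∈ Set.Icc (0 : ℝ) 1 := by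
  rcases S.hAval k j ω with h | h <;> simp [h]

lemma measurable_A_I (k : ℕ) : Measurable fun ω => S.A k (S.I k ω) ω :=
  (measurable_from_prod_countable_left (f := fun q : Ω × Fin d => S.A k q.2 q.1)
    fun j => S.hAmeas k j).comp (measurable_id.prodMk ((S.hImeas k).mono (S.F.le k) le_rfl))

lemma integrable_A (k : ℕ) (j : Fin d) : Integrable (S.A k j) S.μ :=
  have := S.prob
  .of_mem_Icc 0 1 (S.hAmeas k j).aemeasurable (ae_of_all _ (S.A_mem_Icc k j))

lemma integrable_A_I (k : ℕ) : Integrable (fun ω => S.A k (S.I k ω) ω) S.μ :=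
  have := S.prob
  .of_mem_Icc 0 1 (S.measurable_A_I k).aemeasurable (ae_of_all _ fun ω => S.A_mem_Icc k _ ω)

lemma integral_A (k : ℕ) (j : Fin d) : ∫ ω, S.A k j ω ∂S.μ = S.p j := by
  have hindicator : S.A k j = (S.A k j ⁻¹' {1}).indicator 1 := by
    funext ω
    rcases S.hAval k j ω with h | h <;> simp [h]
  rw [hindicator, integral_indicator_one (S.hAmeas k j (measurableSet_singleton 1)),
    measureReal_def]
  exact (congrArg ENNReal.toReal (S.hAlaw k j)).trans (ENNReal.toReal_ofReal (S.hp j).1)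

lemma iIndepFun_A (j : Fin d) : iIndepFun (fun k => S.A k j) S.μ :=
  S.hIndep.precomp (g := fun k => (k, j)) fun _ _ h => (Prod.mk.inj h).1

lemma hasSubgaussianMGF_sum_A_sub_p (n : ℕ) (j : Fin d) :
    HasSubgaussianMGF (fun ω => ∑ k ∈ Finset.range n, (S.A k j ω - S.p j)) (n / 4) S.μ := by
  have := S.prob
  have hoeffding : ∀ k ∈ Finset.range n,
      HasSubgaussianMGF (fun ω => S.A k j ω - S.p j) (1 / 4) S.μ := fun k _ => by
    have h := hasSubgaussianMGF_of_mem_Icc (μ := S.μ) (S.hAmeas k j).aemeasurable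
      (ae_of_all _ (S.A_mem_Icc k j))
    rw [S.integral_A] at h
    convert h using 1
    norm_num
  have h := HasSubgaussianMGF.sum_of_iIndepFun
    ((S.iIndepFun_A j).comp _ fun _ => measurable_id.sub_const (S.p j)) hoeffding
  simpa [div_eq_mul_inv] using h

lemma pseudoRegret_le_integral_regret [Nonempty (Fin d)] (n : ℕ) :
    S.pseudoRegret n ≤ ∫ ω, S.regret n ω ∂S.μ :=
  iSup_integral_le_integral_iSup fun j =>
    integrable_finsetSum _ fun k _ => (S.integrable_A k j).sub' (S.integrable_A_I k)

lemma integral_regret_le [Nonempty (Fin d)] (n : ℕ) :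
    ∫ ω, S.regret n ω ∂S.μ ≤
      ∫ ω, ⨆ j, ∑ k ∈ Finset.range n, (S.A k j ω - S.p j) ∂S.μ + S.pseudoRegret n := by
  have := S.prob
  have hcentred : ∀ j ω, ∑ k ∈ Finset.range n, S.A k j ω
      - ∫ ω', ∑ k ∈ Finset.range n, S.A k j ω' ∂S.μ
      = ∑ k ∈ Finset.range n, (S.A k j ω - S.p j) := fun j ω => by
    rw [integral_finsetSum _ fun k _ => S.integrable_A k j, ← Finset.sum_sub_distrib]
    simp_rw [S.integral_A]
  have h := integral_iSup_sub_le_add_iSup_integral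
    (fun j => integrable_finsetSum (Finset.range n) fun k _ => S.integrable_A k j)
    (integrable_finsetSum (Finset.range n) fun k _ => S.integrable_A_I k)
  simp only [hcentred] at h
  simpa only [regret, pseudoRegret, Finset.sum_sub_distrib] using h

end Bandit

/-- **Proposition 1.1 (i)**: for any admissible strategy, after `n` plays,
`0 ≤ E[Rₙ] - R̄ₙ ≤ √(n log d / 2)`. -/
theorem regret_sub_pseudoRegret (d : ℕ) (hd : 1 ≤ d) (Ω : Type) [MeasurableSpace Ω]
    (S : Bandit d Ω) (n : ℕ) :
    0 ≤ (∫ ω, S.regret n ω ∂S.μ) - S.pseudoRegret n ∧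
      (∫ ω, S.regret n ω ∂S.μ) - S.pseudoRegret n
        ≤ Real.sqrt ((n : ℝ) * Real.log d / 2) := by
  have := S.prob
  have : Nonempty (Fin d) := Fin.pos_iff_nonempty.mp hd
  refine ⟨sub_nonneg.2 (S.pseudoRegret_le_integral_regret n), ?_⟩
  calc (∫ ω, S.regret n ω ∂S.μ) - S.pseudoRegret n
      ≤ ∫ ω, ⨆ j, ∑ k ∈ Finset.range n, (S.A k j ω - S.p j) ∂S.μ :=
        sub_le_iff_le_add.2 (S.integral_regret_le n)
    _ ≤ √(2 * Real.log (Fintype.card (Fin d)) * (n / 4 : ℝ≥0)) :=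
        integral_iSup_le_of_hasSubgaussianMGF (S.hasSubgaussianMGF_sum_A_sub_p n)
    _ = √(n * Real.log d / 2) := by
        rw [Fintype.card_fin]
        congr 1
        push_cast
        ring
end
end

section
/- For the two-armed σ-over-penalized Narendra–Shapiro algorithm, for every n ≥ 0 the conditional expectation of Xₙ₊₁ given Fₙ equals Xₙ + γₙ₊₁·Xₙ(1−Xₙ)(p₁−p₂) + γₙ₊₁ρₙ₊₁·[(1−Xₙ)²(1−σp₂) − Xₙ²(1−σp₁)]. -/
/-! Given `Fₙ`, the step `n → n+1` is decided by the arm played, its reward and the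
penalization bit: on each of these eight events `Xₙ₊₁` is a fixed affine image of `Xₙ`, and
the field `condLaw` gives the conditional probability of each event as a polynomial in `Xₙ`.
Hence `E[Xₙ₊₁ | Fₙ]` is the corresponding weighted average of the eight updates, which
simplifies to the stated drift. Each update maps `[0, 1]` into itself, so the `Fₙ`-measurable
coefficients are bounded and may be pulled out of the conditional expectation. -/

open MeasureTheory ProbabilityTheory Real Filter

noncomputable section

/-- Step sequence `γₙ = γ₁ / √n` (also used for `ρₙ = ρ₁ / √n`). -/
def NSstep (c : ℝ) (n : ℕ) : ℝ := c / Real.sqrt n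

/-- Real value (`0` or `1`) attached to a Boolean Bernoulli outcome. -/
def bval (b : Bool) : ℝ := if b then 1 else 0

/-- Probability that a Bernoulli random variable of parameter `p` takes the value `b`. -/
def bern (p : ℝ) (b : Bool) : ℝ := if b then p else 1 - p

/-- The two-armed `σ`-over-penalized Narendra–Shapiro algorithm with steps
`γₙ = γ₁/√n` and `ρₙ = ρ₁/√n`.  Arm `0` (reward probability `p₁`) is the best arm,
arm `1` has reward probability `p₂`.  `Xₙ` is the probability of drawing arm `0` at
time `n`, `Iₙ₊₁` is the arm selected at step `n+1`, `Aₙʲ` the reward of arm `j` at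
time `n` and `Bₙ` the extra Bernoulli(σ) variables used for the over-penalization. -/
structure NS2 (Ω : Type) [mΩ : MeasurableSpace Ω] where
  μ : Measure Ω
  prob : IsProbabilityMeasure μ
  p₁ : ℝ
  p₂ : ℝ
  σ : ℝ
  γ₁ : ℝ
  ρ₁ : ℝ
  hp₂ : 0 ≤ p₂
  hp : p₂ < p₁
  hp₁ : p₁ ≤ 1
  hσ : σ ∈ Set.Icc (0:ℝ) 1
  hγ₁ : γ₁ ∈ Set.Ioo (0:ℝ) 1
  hρ₁ : ρ₁ ∈ Set.Ioo (0:ℝ) 1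
  A : ℕ → Fin 2 → Ω → ℝ
  B : ℕ → Ω → ℝ
  I : ℕ → Ω → Fin 2
  X : ℕ → Ω → ℝ
  F : Filtration ℕ mΩ
  hAmeas : ∀ n j, Measurable (A n j)
  hBmeas : ∀ n, Measurable (B n)
  hAval : ∀ n j ω, A n j ω = 0 ∨ A n j ω = 1
  hBval : ∀ n ω, B n ω = 0 ∨ B n ω = 1
  hAlaw : ∀ n (j : Fin 2), μ {ω | A n j ω = 1} = ENNReal.ofReal (if j = 0 then p₁ else p₂)
  hBlaw : ∀ n, μ {ω | B n ω = 1} = ENNReal.ofReal σ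
  /-- the reward sequences and the penalization sequence are (mutually) independent -/
  hIndep : iIndepFun
      (fun (k : ℕ × Fin 3) ω => if k.2 = 0 then A k.1 0 ω else if k.2 = 1 then A k.1 1 ω else B k.1 ω) μ
  hX0 : ∀ ω, X 0 ω ∈ Set.Icc (0:ℝ) 1
  hXmeas : ∀ n, Measurable[F n] (X n)
  hImeas : ∀ n, Measurable[F (n+1)] (I (n+1))
  hObs : ∀ n, Measurable[F (n+1)] (fun ω => A (n+1) (I (n+1) ω) ω)
  /-- conditionally on the past, the arm `Iₙ₊₁` is drawn with distribution `(Xₙ, 1-Xₙ)`,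
  independently of the (Bernoulli) rewards and of `Bₙ₊₁`. -/
  condLaw : ∀ n (j : Fin 2) (a b : Bool),
    (μ[Set.indicator {ω | I (n+1) ω = j ∧ A (n+1) j ω = bval a ∧ B (n+1) ω = bval b}
        (fun _ => (1:ℝ)) | F n])
      =ᵐ[μ] fun ω => (if j = 0 then X n ω else 1 - X n ω) * bern (if j = 0 then p₁ else p₂) a
          * bern σ b
  /-- the recursive update of the algorithm -/
  hrec : ∀ n ω, X (n+1) ω = X n ω
      + NSstep γ₁ (n+1) * ((if I (n+1) ω = 0 then 1 else 0) - X n ω) * A (n+1) (I (n+1) ω) ω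
      - NSstep γ₁ (n+1) * NSstep ρ₁ (n+1) *
        (X n ω * (if I (n+1) ω = 0 then 1 else 0)
          - (1 - X n ω) * (if I (n+1) ω = 1 then 1 else 0)) *
        (1 - A (n+1) (I (n+1) ω) ω * B (n+1) ω)

/-- Pseudo-regret after `n` plays: `R̄ₙ = (p₁-p₂) E[∑_{k=1}^n (1-X_k)]`. -/
def NS2.pseudoRegret {Ω : Type} [MeasurableSpace Ω] (S : NS2 Ω) (n : ℕ) : ℝ :=
  (S.p₁ - S.p₂) * ∫ ω, (∑ k ∈ Finset.Icc 1 n, (1 - S.X k ω)) ∂S.μ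

open Set

lemma NSstep_mem_Icc {c : ℝ} (hc : c ∈ Icc (0:ℝ) 1) (n : ℕ) : NSstep c n ∈ Icc (0:ℝ) 1 := by
  rcases Nat.eq_zero_or_pos n with rfl | hn
  · simp [NSstep]
  · have h1 : (1:ℝ) ≤ √n := Real.one_le_sqrt.2 (by exact_mod_cast hn)
    exact ⟨div_nonneg hc.1 (by positivity), (div_le_self hc.1 h1).trans hc.2⟩

lemma bval_mem_Icc (b : Bool) : bval b ∈ Icc (0:ℝ) 1 := by
  cases b <;> simp [bval]

lemma eq_bval_iff {x : ℝ} (hx : x = 0 ∨ x = 1) (b : Bool) : x = bval b ↔ decide (x = 1) = b := by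
  rcases hx with rfl | rfl <;> cases b <;> simp [bval]

lemma bval_decide_eq_one {x : ℝ} (hx : x = 0 ∨ x = 1) : bval (decide (x = 1)) = x :=
  ((eq_bval_iff hx _).2 rfl).symm

theorem condExp_sum_mul_indicator {Ω ι : Type*} [Fintype ι] {m m₀ : MeasurableSpace Ω}
    {μ : Measure Ω} [IsFiniteMeasure μ] (hm : m ≤ m₀) {c : ι → Ω → ℝ} {E : ι → Set Ω} {C : ℝ}
    (hc : ∀ k, StronglyMeasurable[m] (c k)) (hcC : ∀ k ω, ‖c k ω‖ ≤ C)
    (hE : ∀ k, MeasurableSet (E k)) :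
    μ[fun ω => ∑ k, c k ω * (E k).indicator (fun _ => (1:ℝ)) ω | m]
      =ᵐ[μ] fun ω => ∑ k, c k ω * μ[(E k).indicator (fun _ => (1:ℝ)) | m] ω := by
  have hE1 : ∀ k, Integrable ((E k).indicator fun _ => (1:ℝ)) μ :=
    fun k => (integrable_const 1).indicator (hE k)
  have hsum : (fun ω => ∑ k, c k ω * (E k).indicator (fun _ => (1:ℝ)) ω)
      = ∑ k, c k * (E k).indicator (fun _ => (1:ℝ)) := by
    funext ω; simp only [Finset.sum_apply, Pi.mul_apply]
  rw [hsum]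
  refine (condExp_finsetSum (fun k _ => (hE1 k).bdd_mul ((hc k).mono hm).aestronglyMeasurable
    (ae_of_all _ (hcC k))) m).trans ?_
  filter_upwards [ae_all_iff.2 fun k => condExp_stronglyMeasurable_mul_of_bound hm (hc k) (hE1 k) C
    (ae_of_all _ (hcC k))] with ω hω
  rw [Finset.sum_apply]
  exact Finset.sum_congr rfl fun k _ => hω k

def nsUpdate (γ ρ : ℝ) (j : Fin 2) (a b x : ℝ) : ℝ :=
  x + γ * ((if j = 0 then 1 else 0) - x) * a
    - γ * ρ * (x * (if j = 0 then 1 else 0) - (1 - x) * (if j = 1 then 1 else 0)) * (1 - a * b)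

lemma continuous_nsUpdate (γ ρ : ℝ) (j : Fin 2) (a b : ℝ) : Continuous (nsUpdate γ ρ j a b) := by
  unfold nsUpdate; fun_prop

lemma nsUpdate_mem_Icc {γ ρ a b x : ℝ} (hγ : γ ∈ Icc (0:ℝ) 1) (hρ : ρ ∈ Icc (0:ℝ) 1)
    (ha : a ∈ Icc (0:ℝ) 1) (hb : b ∈ Icc (0:ℝ) 1) (hx : x ∈ Icc (0:ℝ) 1) (j : Fin 2) :
    nsUpdate γ ρ j a b x ∈ Icc (0:ℝ) 1 := by
  obtain ⟨hγ0, hγ1⟩ := hγ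
  obtain ⟨hρ0, hρ1⟩ := hρ
  obtain ⟨ha0, ha1⟩ := ha
  obtain ⟨hb0, hb1⟩ := hb
  obtain ⟨hx0, hx1⟩ := hx
  have hγρ : γ * ρ ≤ 1 := mul_le_one₀ hγ1 hρ0 hρ1
  have hab0 : 0 ≤ 1 - a * b := by nlinarith
  have hab1 : 1 - a * b ≤ 1 := by nlinarith
  have hγa : γ * a ≤ 1 := mul_le_one₀ hγ1 ha0 ha1
  have hpen : γ * ρ * (1 - a * b) ≤ 1 := mul_le_one₀ hγρ hab0 hab1
  have hpen0 : 0 ≤ γ * ρ * (1 - a * b) := by positivity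
  fin_cases j <;> simp only [nsUpdate] <;> norm_num <;> constructor <;>
    nlinarith [mul_nonneg hpen0 hx0, mul_nonneg hpen0 (sub_nonneg.2 hx1),
      mul_nonneg (sub_nonneg.2 hpen) hx0, mul_nonneg (sub_nonneg.2 hpen) (sub_nonneg.2 hx1),
      mul_nonneg (sub_nonneg.2 hγa) hx0, mul_nonneg (sub_nonneg.2 hγa) (sub_nonneg.2 hx1),
      mul_nonneg (mul_nonneg hγ0 ha0) hx0, mul_nonneg (mul_nonneg hγ0 ha0) (sub_nonneg.2 hx1)]

lemma sum_nsUpdate_mul_prob (γ ρ p₁ p₂ σ x : ℝ) :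
    ∑ k : Fin 2 × Bool × Bool, nsUpdate γ ρ k.1 (bval k.2.1) (bval k.2.2) x *
        ((if k.1 = 0 then x else 1 - x) * bern (if k.1 = 0 then p₁ else p₂) k.2.1 * bern σ k.2.2)
      = x + γ * (x * (1 - x) * (p₁ - p₂))
        + γ * ρ * ((1 - x)^2 * (1 - σ * p₂) - x^2 * (1 - σ * p₁)) := by
  simp only [Fintype.sum_prod_type, Fintype.sum_bool, Fin.sum_univ_two, nsUpdate, bval, bern]
  norm_num
  ring

namespace NS2

variable {Ω : Type} [MeasurableSpace Ω] (S : NS2 Ω)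

lemma X_succ_eq (n : ℕ) (ω : Ω) :
    S.X (n+1) ω = nsUpdate (NSstep S.γ₁ (n+1)) (NSstep S.ρ₁ (n+1)) (S.I (n+1) ω)
      (S.A (n+1) (S.I (n+1) ω) ω) (S.B (n+1) ω) (S.X n ω) :=
  S.hrec n ω

lemma X_mem_Icc (n : ℕ) (ω : Ω) : S.X n ω ∈ Icc (0:ℝ) 1 := by
  induction n generalizing ω with
  | zero => exact S.hX0 ω
  | succ n ih =>
    have hval : ∀ x : ℝ, x = 0 ∨ x = 1 → x ∈ Icc (0:ℝ) 1 := by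
      rintro x (rfl | rfl) <;> simp
    rw [X_succ_eq]
    exact nsUpdate_mem_Icc (NSstep_mem_Icc (Ioo_subset_Icc_self S.hγ₁) _)
      (NSstep_mem_Icc (Ioo_subset_Icc_self S.hρ₁) _) (hval _ (S.hAval _ _ _))
      (hval _ (S.hBval _ _)) (ih ω) _

def cell (n : ℕ) (k : Fin 2 × Bool × Bool) : Set Ω :=
  {ω | S.I (n+1) ω = k.1 ∧ S.A (n+1) k.1 ω = bval k.2.1 ∧ S.B (n+1) ω = bval k.2.2}

def outcome (n : ℕ) (ω : Ω) : Fin 2 × Bool × Bool :=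
  (S.I (n+1) ω, decide (S.A (n+1) (S.I (n+1) ω) ω = 1), decide (S.B (n+1) ω = 1))

lemma mem_cell_iff {n : ℕ} {ω : Ω} {k : Fin 2 × Bool × Bool} :
    ω ∈ S.cell n k ↔ S.outcome n ω = k := by
  obtain ⟨j, a, b⟩ := k
  simp only [cell, outcome, Prod.mk.injEq]
  constructor
  · rintro ⟨rfl, hA, hB⟩
    exact ⟨rfl, (eq_bval_iff (S.hAval _ _ _) a).1 hA, (eq_bval_iff (S.hBval _ _) b).1 hB⟩
  · rintro ⟨rfl, hA, hB⟩
    exact ⟨rfl, (eq_bval_iff (S.hAval _ _ _) a).2 hA, (eq_bval_iff (S.hBval _ _) b).2 hB⟩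

lemma measurableSet_cell (n : ℕ) (k : Fin 2 × Bool × Bool) : MeasurableSet (S.cell n k) :=
  ((S.hImeas n).mono (S.F.le _) le_rfl (measurableSet_singleton _)).inter
    ((S.hAmeas _ _ (measurableSet_singleton _)).inter (S.hBmeas _ (measurableSet_singleton _)))

lemma X_succ_eq_sum (n : ℕ) (ω : Ω) :
    S.X (n+1) ω = ∑ k : Fin 2 × Bool × Bool,
      nsUpdate (NSstep S.γ₁ (n+1)) (NSstep S.ρ₁ (n+1)) k.1 (bval k.2.1) (bval k.2.2) (S.X n ω) *
        (S.cell n k).indicator (fun _ => (1:ℝ)) ω := by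
  rw [Fintype.sum_eq_single (S.outcome n ω), indicator_of_mem (S.mem_cell_iff.2 rfl), mul_one,
    X_succ_eq]
  · rw [outcome, bval_decide_eq_one (S.hAval _ _ _), bval_decide_eq_one (S.hBval _ _)]
  · intro k hk
    rw [indicator_of_notMem (fun h => hk (S.mem_cell_iff.1 h).symm), mul_zero]

end NS2

/-- One step drift of the two-armed `σ`-over-penalized Narendra–Shapiro algorithm:
`E[Xₙ₊₁ | Fₙ] = Xₙ + γₙ₊₁ Xₙ(1-Xₙ)(p₁-p₂) + γₙ₊₁ρₙ₊₁ [(1-Xₙ)²(1-σp₂) - Xₙ²(1-σp₁)]`. -/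
theorem condExp_step_NS2 (Ω : Type) [MeasurableSpace Ω] (S : NS2 Ω) (n : ℕ) :
    (S.μ[S.X (n+1) | S.F n]) =ᵐ[S.μ] fun ω =>
      S.X n ω + NSstep S.γ₁ (n+1) * (S.X n ω * (1 - S.X n ω) * (S.p₁ - S.p₂))
        + NSstep S.γ₁ (n+1) * NSstep S.ρ₁ (n+1) *
          ((1 - S.X n ω)^2 * (1 - S.σ * S.p₂) - (S.X n ω)^2 * (1 - S.σ * S.p₁)) := by
  have := S.prob
  have hγ := NSstep_mem_Icc (Ioo_subset_Icc_self S.hγ₁) (n+1)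
  have hρ := NSstep_mem_Icc (Ioo_subset_Icc_self S.hρ₁) (n+1)
  have hbound : ∀ (k : Fin 2 × Bool × Bool) ω, ‖nsUpdate (NSstep S.γ₁ (n+1)) (NSstep S.ρ₁ (n+1))
      k.1 (bval k.2.1) (bval k.2.2) (S.X n ω)‖ ≤ 1 := fun k ω => by
    obtain ⟨h0, h1⟩ := nsUpdate_mem_Icc hγ hρ (bval_mem_Icc _) (bval_mem_Icc _) (S.X_mem_Icc n ω) k.1
    exact (Real.norm_of_nonneg h0).trans_le h1
  rw [funext (S.X_succ_eq_sum n)]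
  refine (condExp_sum_mul_indicator (S.F.le n)
    (fun k => ((continuous_nsUpdate _ _ _ _ _).measurable.comp (S.hXmeas n)).stronglyMeasurable)
    hbound (S.measurableSet_cell n)).trans ?_
  filter_upwards [ae_all_iff.2 fun k : Fin 2 × Bool × Bool => S.condLaw n k.1 k.2.1 k.2.2]
    with ω hω
  rw [← sum_nsUpdate_mul_prob]
  exact Finset.sum_congr rfl fun k _ => congrArg _ (hω k)
end
end

section
/- Let σ ∈ [0,1), ε ∈ (0,1/3), ρ̃₁ ≤ 227/232, and 1/(3√2·(1−σ)·ρ̃₁) ≤ γ₁² ≤ 3/(2(1+ρ̃₁)), and set n₀ = ⌊1/(4ε²γ₁²π²)⌋ + 1. Then for every n ≥ n₀ the cubic polynomial Pₙ(x) = ((1−x)²/γₙ₊₁)(εₙ − 3πx) − 3ρ̃₁(1−x)κ_σ(x) + 3(x(1−x)²p₁ + x²(1−x)p₂) + γₙ₊₁(−x(1−x)²p₁ + x³p₂) is negative on the interval [0, 1 − 2(1+ρ̃₁)γₙ₊₁/π]. -/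
noncomputable section

/-- `εₙ = 1/γₙ₊₁ - 1/γₙ`. -/
def epsSeq (γ₁ : ℝ) (n : ℕ) : ℝ := 1 / NSstep γ₁ (n+1) - 1 / NSstep γ₁ n

/-- The penalty drift `κ_σ(x) = (1-σp₂)(1-x)² - (1-σp₁)x²`. -/
def kappa (p₁ p₂ σ : ℝ) (x : ℝ) : ℝ := (1 - σ * p₂) * (1 - x)^2 - (1 - σ * p₁) * x^2

/-- The cubic polynomial `Pₙ` (with `π = p₁ - p₂` and `ρ̃₁ = ρ₁/γ₁`):
`Pₙ(x) = ((1-x)²/γₙ₊₁)(εₙ - 3πx) - 3ρ̃₁(1-x)κ_σ(x) + 3(x(1-x)²p₁ + x²(1-x)p₂)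
          + γₙ₊₁(-x(1-x)²p₁ + x³p₂)`. -/
def Pcub (p₁ p₂ σ γ₁ ρ₁ : ℝ) (n : ℕ) (x : ℝ) : ℝ :=
  ((1 - x)^2 / NSstep γ₁ (n+1)) * (epsSeq γ₁ n - 3 * (p₁ - p₂) * x)
    - 3 * (ρ₁ / γ₁) * (1 - x) * kappa p₁ p₂ σ x
    + 3 * (x * (1 - x)^2 * p₁ + x^2 * (1 - x) * p₂)
    + NSstep γ₁ (n+1) * (-(x * (1 - x)^2 * p₁) + x^3 * p₂)

lemma aux1 (r s t : ℝ) (hr0' : 0 ≤ r) (hr2 : r^2 = 2) (hs1 : 1 ≤ s) (ht0 : 0 < t)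
    (ht2s : t^2 = s^2 + 1) : t*(t-s) ≤ 2 - r := by
  have hs0 : (0:ℝ) ≤ s := by linarith
  have hr0 : 0 < r := by nlinarith
  have hr32 : r ≤ 3/2 := by nlinarith
  have hstt : (s*t)^2 = s^2*(s^2+1) := by linear_combination s^2*ht2s
  have hsq : (s^2 + r - 1)^2 ≤ (s*t)^2 := by nlinarith
  have hst : s^2 + r - 1 ≤ s*t := by nlinarith [mul_nonneg hs0 ht0.le]
  nlinarith [hst]

lemma aux2 (r C u x : ℝ) (hr0' : 0 ≤ r) (hr2 : r^2 = 2) (hu0 : 0 < u) (hx0 : 0 ≤ x)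
    (hxeq : x = 1 - u) (hC : 232 ≤ 681*r*C) :
    (2-r)*u^2 - (r/2)*u^3 - (5/2)*C*(x*u) < 0 := by
  have hr0 : 0 < r := by nlinarith
  have hrlb : 1.4142 ≤ r := by nlinarith
  have hrub : r ≤ 1.41422 := by nlinarith
  have hu1 : u ≤ 1 := by rw [hxeq] at hx0; linarith
  have hCslack : 0 ≤ (681*r*C - 232)*(x*u) :=
    mul_nonneg (by linarith) (mul_nonneg hx0 hu0.le)
  nlinarith [hCslack, mul_nonneg (sq_nonneg (u-84/100)) hu0.le,
    mul_pos hu0 hu0, mul_pos (mul_pos hu0 hu0) hu0, mul_nonneg hx0 hu0.le]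

set_option maxHeartbeats 2000000 in
/-- **Proposition 4.5 (i)**: negativity of the cubic polynomial `Pₙ` on
`[0, 1 - 2(1+ρ̃₁)γₙ₊₁/π]` for `n ≥ n₀ = ⌊1/(4ε²γ₁²π²)⌋ + 1`, under the conditions
`σ ∈ [0,1)`, `ε ∈ (0,1/3)`, `ρ̃₁ ≤ 227/232` and `1/(3√2(1-σ)ρ̃₁) ≤ γ₁² ≤ 3/(2(1+ρ̃₁))`. -/
theorem Pcub_neg (p₁ p₂ σ γ₁ ρ₁ : ℝ)
    (hp₂ : 0 ≤ p₂) (hp : p₂ < p₁) (hp₁ : p₁ ≤ 1)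
    (hσ : σ ∈ Set.Ico (0:ℝ) 1)
    (hγ₁ : γ₁ ∈ Set.Ioo (0:ℝ) 1) (hρ₁ : ρ₁ ∈ Set.Ioo (0:ℝ) 1)
    (ε : ℝ) (hε : 0 < ε) (hε' : ε < 1/3)
    (hrho1 : ρ₁ / γ₁ ≤ 227/232)
    (hγlow : 1 / (3 * Real.sqrt 2 * (1 - σ) * (ρ₁ / γ₁)) ≤ γ₁^2)
    (hγhigh : γ₁^2 ≤ 3 / (2 * (1 + ρ₁ / γ₁)))
    (n₀ : ℕ) (hn₀ : n₀ = Nat.floor (1 / (4 * ε^2 * γ₁^2 * (p₁ - p₂)^2)) + 1) :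
    ∀ n, n₀ ≤ n → ∀ x : ℝ, 0 ≤ x →
      x ≤ 1 - 2 * (1 + ρ₁ / γ₁) * NSstep γ₁ (n+1) / (p₁ - p₂) →
      Pcub p₁ p₂ σ γ₁ ρ₁ n x < 0 := by
  obtain ⟨hσ0, hσ1⟩ := hσ
  obtain ⟨hγ0, hγ1⟩ := hγ₁
  obtain ⟨hρ0, hρ1'⟩ := hρ₁
  intro n hn x hx0 hxu
  have hπ : 0 < p₁ - p₂ := sub_pos.2 hp
  have hπ1 : p₁ - p₂ ≤ 1 := by linarith
  have hn1 : 1 ≤ n := le_trans (by omega) hn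
  clear hε hε' hγhigh hn
  set r := Real.sqrt 2 with hr_def
  have hr2 : r^2 = 2 := Real.sq_sqrt (by norm_num)
  have hr0 : 0 < r := Real.sqrt_pos.2 (by norm_num)
  set s := Real.sqrt (n : ℝ) with hs_def
  set t := Real.sqrt ((n : ℝ) + 1) with ht_def
  have hs2 : s^2 = (n : ℝ) := Real.sq_sqrt (Nat.cast_nonneg n)
  have ht2 : t^2 = (n : ℝ) + 1 := Real.sq_sqrt (by positivity)
  have hs0 : 0 ≤ s := Real.sqrt_nonneg _
  have ht0 : 0 < t := Real.sqrt_pos.2 (by positivity)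
  have hn1' : (1:ℝ) ≤ (n : ℝ) := by exact_mod_cast hn1
  have hs1 : 1 ≤ s := by nlinarith [hs2, hs0]
  have ht2s : t^2 = s^2 + 1 := by rw [ht2, hs2]
  clear_value r s t
  have hkey : t*(t-s) ≤ 2 - r := aux1 r s t hr0.le hr2 hs1 ht0 ht2s
  clear hs2 ht2 hn1' hn1 hn₀
  -- rewriting NSstep / epsSeq
  have hNS : NSstep γ₁ (n+1) = γ₁ / t := by
    unfold NSstep; rw [ht_def]; push_cast; ring_nf
  have hNSn : NSstep γ₁ n = γ₁ / s := by
    unfold NSstep; rw [hs_def]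
  have hE : epsSeq γ₁ n = (t - s)/γ₁ := by
    unfold epsSeq; rw [hNS, hNSn, one_div_div, one_div_div]; ring
  set u := 1 - x with hu_def
  clear_value u
  rw [hNS] at hxu
  have hut : 2*(γ₁+ρ₁) ≤ (p₁-p₂)*(u*t) := by
    have h5 : 2*(1+ρ₁/γ₁)*(γ₁/t)/(p₁-p₂) ≤ u := by rw [hu_def]; linarith
    have e : 2*(1+ρ₁/γ₁)*(γ₁/t)/(p₁-p₂) = 2*(γ₁+ρ₁)/((p₁-p₂)*t) := by
      field_simp
    rw [e, div_le_iff₀ (mul_pos hπ ht0)] at h5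
    linarith [h5]
  have hu0 : 0 < u := by
    by_contra h
    push_neg at h
    have e : (p₁-p₂)*(u*t) = ((p₁-p₂)*t)*u := by ring
    have h6 : ((p₁-p₂)*t)*u ≤ 0 :=
      mul_nonpos_of_nonneg_of_nonpos (mul_pos hπ ht0).le h
    rw [e] at hut; linarith
  have hx1 : x ≤ 1 := by
    have h7 := hu0
    rw [hu_def] at h7
    linarith
  -- lower bound facts from hγlow
  have hd : 0 < 3*r*(1-σ)*(ρ₁/γ₁) := by
    have h1 : 0 < ρ₁/γ₁ := div_pos hρ0 hγ0
    have h2 : 0 < 1 - σ := by linarith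
    positivity
  rw [div_le_iff₀ hd] at hγlow
  have hlow' : 1 ≤ 3*r*(1-σ)*(ρ₁*γ₁) := by
    have e : γ₁^2*(3*r*(1-σ)*(ρ₁/γ₁)) = 3*r*(1-σ)*(ρ₁*γ₁) := by
      field_simp
    linarith [e.symm.le, e.le]
  have hc3 : r/2 ≤ 3*(1-σ)*(ρ₁*γ₁) := by
    have h := mul_le_mul_of_nonneg_left hlow' (by positivity : (0:ℝ) ≤ r/2)
    calc r/2 = r/2*1 := by ring
      _ ≤ r/2*(3*r*(1-σ)*(ρ₁*γ₁)) := h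
      _ = (r^2) * (3/2*(1-σ)*(ρ₁*γ₁)) := by ring
      _ = 2 * (3/2*(1-σ)*(ρ₁*γ₁)) := by rw [hr2]
      _ = 3*(1-σ)*(ρ₁*γ₁) := by ring
  have h2 : ρ₁ ≤ 227/232*γ₁ := by rw [div_le_iff₀ hγ0] at hrho1; linarith
  have hC : 232 ≤ 681*r*γ₁^2 := by
    have s1 : (0:ℝ) ≤ σ*(3*r*(ρ₁*γ₁)) := by positivity
    have s2 := mul_le_mul_of_nonneg_right h2 (by positivity : (0:ℝ) ≤ 3*r*γ₁)
    linarith [hlow', s1, s2]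
  clear hγlow hrho1 hd
  -- the polynomial identity
  have hPeq : γ₁^2 * t * Pcub p₁ p₂ σ γ₁ ρ₁ n x =
      u^2*t^2*(t-s) - 3*(p₁-p₂)*x*(u^2*t^2*γ₁)
        - 3*(ρ₁*γ₁)*t*(u*((1-σ*p₂)*u^2-(1-σ*p₁)*x^2))
        + 3*(γ₁^2*t)*(x*u^2*p₁+x^2*u*p₂)
        + γ₁^3*(-(x*u^2*p₁)+x^3*p₂) := by
    unfold Pcub kappa
    rw [hE, hNS, hu_def]
    field_simp
  -- individual bounds
  have b1 : u^2*t^2*(t-s) ≤ (2-r)*(u^2*t) := by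
    linarith [mul_le_mul_of_nonneg_left hkey (mul_nonneg (sq_nonneg u) ht0.le)]
  have hxut : 0 ≤ x*u*t := mul_nonneg (mul_nonneg hx0 hu0.le) ht0.le
  have b2 : 6*(γ₁+ρ₁)*γ₁*(x*u*t) ≤ 3*(p₁-p₂)*x*(u^2*t^2*γ₁) := by
    linarith [mul_le_mul_of_nonneg_left hut
      (by nlinarith [hxut, hγ0] : (0:ℝ) ≤ 3*(x*u*t*γ₁))]
  have hp₂1 : p₂ ≤ 1 := by linarith
  have hp₁0 : 0 ≤ p₁ := by linarith
  have hκ : (1-σ)*u^2 - x^2 ≤ (1-σ*p₂)*u^2-(1-σ*p₁)*x^2 := by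
    linarith [mul_nonneg (mul_nonneg hσ0 (by linarith : 0 ≤ 1 - p₂)) (sq_nonneg u),
      mul_nonneg (mul_nonneg hσ0 hp₁0) (sq_nonneg x)]
  have hfac : (0:ℝ) ≤ 3*(ρ₁*γ₁)*t*u :=
    mul_nonneg (mul_nonneg (by positivity) ht0.le) hu0.le
  have b3a : -(3*(ρ₁*γ₁)*t*(u*((1-σ*p₂)*u^2-(1-σ*p₁)*x^2))) ≤
      -(3*(ρ₁*γ₁)*t*(u*((1-σ)*u^2 - x^2))) := by
    linarith [mul_le_mul_of_nonneg_left hκ hfac]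
  have b3c : -(3*(ρ₁*γ₁)*(1-σ))*(u^3*t) ≤ -(r/2)*(u^3*t) := by
    linarith [mul_le_mul_of_nonneg_right hc3
      (mul_nonneg (pow_nonneg hu0.le 3) ht0.le : (0:ℝ) ≤ u^3*t)]
  have hx2 : x^2 ≤ x := by
    linarith [mul_nonneg hx0 (by linarith : (0:ℝ) ≤ 1 - x)]
  have b3d : 3*(ρ₁*γ₁)*(x^2*(u*t)) ≤ 3*(ρ₁*γ₁)*(x*(u*t)) := by
    linarith [mul_le_mul_of_nonneg_right hx2
      (mul_nonneg (by positivity) (mul_nonneg hu0.le ht0.le) :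
        (0:ℝ) ≤ 3*(ρ₁*γ₁)*(u*t))]
  have b4 : 3*(γ₁^2*t)*(x*u^2*p₁+x^2*u*p₂) ≤ 3*γ₁^2*(x*u*t) := by
    have hux : x*u^2 + x^2*u = x*u := by rw [hu_def]; ring
    have hin : x*u^2*p₁+x^2*u*p₂ ≤ x*u := by
      linarith [mul_nonneg (mul_nonneg hx0 (sq_nonneg u)) (by linarith : 0 ≤ 1-p₁),
        mul_nonneg (mul_nonneg (mul_nonneg hx0 hx0) hu0.le) (by linarith : 0 ≤ 1-p₂)]
    linarith [mul_le_mul_of_nonneg_left hin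
      (mul_nonneg (by norm_num : (0:ℝ) ≤ 3) (mul_nonneg (sq_nonneg γ₁) ht0.le) :
        (0:ℝ) ≤ 3*(γ₁^2*t))]
  have hut2 : 2*γ₁ ≤ u*t := by
    linarith [hut, mul_nonneg (by linarith : (0:ℝ) ≤ 1-(p₁-p₂))
      (mul_nonneg hu0.le ht0.le), hρ0]
  have b5 : γ₁^3*(-(x*u^2*p₁)+x^3*p₂) ≤ (1/2)*γ₁^2*(x*u*t) := by
    have hx3 : x^3 ≤ x^2 := by
      linarith [mul_le_mul_of_nonneg_left hx2 hx0]
    have hin : -(x*u^2*p₁)+x^3*p₂ ≤ x := by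
      linarith [mul_nonneg (mul_nonneg hx0 (sq_nonneg u)) hp₁0,
        mul_nonneg (pow_nonneg hx0 3) (by linarith : 0 ≤ 1-p₂), hx2]
    have h1 : γ₁^3*(-(x*u^2*p₁)+x^3*p₂) ≤ γ₁^3*x :=
      mul_le_mul_of_nonneg_left hin (by positivity)
    linarith [h1, mul_le_mul_of_nonneg_left hut2
      (by positivity : (0:ℝ) ≤ (1/2)*γ₁^2*x)]
  have hslack : (0:ℝ) ≤ ρ₁*γ₁*(x*u*t) := mul_nonneg (by positivity) hxut
  -- combine
  have hsum : γ₁^2 * t * Pcub p₁ p₂ σ γ₁ ρ₁ n x ≤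
      t*((2-r)*u^2 - (r/2)*u^3 - (5/2)*γ₁^2*(x*u)) := by
    rw [hPeq]
    linarith [b1, b2, b3a, b3c, b3d, b4, b5, hslack]
  have hq : (2-r)*u^2 - (r/2)*u^3 - (5/2)*γ₁^2*(x*u) < 0 :=
    aux2 r (γ₁^2) u x hr0.le hr2 hu0 hx0 (by rw [hu_def]; ring) hC
  have hfin : γ₁^2 * t * Pcub p₁ p₂ σ γ₁ ρ₁ n x < 0 :=
    lt_of_le_of_lt hsum (mul_neg_of_pos_of_neg ht0 hq)
  by_contra hP
  push_neg at hP
  have : 0 ≤ γ₁^2 * t * Pcub p₁ p₂ σ γ₁ ρ₁ n x :=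
    mul_nonneg (mul_nonneg (sq_nonneg γ₁) ht0.le) hP
  linarith


end
end

section
/- Let d ≥ 2 and let p₁ > p₂ > … > p_d be real numbers. Define, for x = (x₁,…,x_d) in the simplex Δ = {x ∈ [0,1]^d : Σᵢ xᵢ = 1}, the vector field h with components hᵢ(x) = xᵢ·Σ_{j≠i} x_j (pᵢ − p_j). Then the zeros of h in Δ are exactly the d vertices δ¹,…,δᵈ of the simplex, where δⁱ has i-th coordinate 1 and all other coordinates 0. -/
/-- **Equilibria of the ODE of the multi-armed Narendra–Shapiro algorithm.**
For `p₁ > p₂ > … > p_d` and `hᵢ(x) = xᵢ ∑_{j≠i} x_j (pᵢ - p_j)` on the simplex,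
the zeros of `h` are exactly the `d` vertices of the simplex. -/
theorem zeros_of_drift (d : ℕ) (hd : 2 ≤ d) (p : Fin d → ℝ) (hp : StrictAnti p)
    (x : Fin d → ℝ) (hx : x ∈ stdSimplex ℝ (Fin d)) :
    (∀ i : Fin d, x i * ∑ j ∈ Finset.univ.erase i, x j * (p i - p j) = 0) ↔
      ∃ i : Fin d, x = fun j => if j = i then 1 else 0 := by
  obtain ⟨hnn, hsum⟩ := hx
  constructor
  · intro hzero
    -- support
    set S : Finset (Fin d) := Finset.univ.filter (fun i => 0 < x i) with hS
    have hSne : S.Nonempty := by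
      by_contra hempty
      rw [Finset.not_nonempty_iff_eq_empty] at hempty
      have : ∀ i, x i = 0 := by
        intro i
        by_contra hne
        have : 0 < x i := lt_of_le_of_ne (hnn i) (Ne.symm hne)
        have : i ∈ S := by simp [hS, this]
        simp [hempty] at this
      simp [this] at hsum
    obtain ⟨i, hiS, hiMin⟩ := S.exists_min_image id hSne
    have hxi : 0 < x i := by simpa [hS] using hiS
    have hterm : ∀ j ∈ Finset.univ.erase i, 0 ≤ x j * (p i - p j) := by
      intro j hj
      rcases eq_or_lt_of_le (hnn j) with h0 | h0
      · simp [← h0]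
      · have hjS : j ∈ S := by simp [hS, h0]
        have hij : i ≠ j := (Finset.mem_erase.mp hj).1.symm
        have : i < j := lt_of_le_of_ne (hiMin j hjS) hij
        have := hp this
        nlinarith
    have hsum0 : ∑ j ∈ Finset.univ.erase i, x j * (p i - p j) = 0 := by
      rcases mul_eq_zero.mp (hzero i) with h | h
      · exact absurd h (ne_of_gt hxi)
      · exact h
    have hall : ∀ j ∈ Finset.univ.erase i, x j * (p i - p j) = 0 :=
      (Finset.sum_eq_zero_iff_of_nonneg hterm).mp hsum0
    have hxj : ∀ j : Fin d, j ≠ i → x j = 0 := by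
      intro j hji
      have hj : j ∈ Finset.univ.erase i := Finset.mem_erase.mpr ⟨hji, Finset.mem_univ j⟩
      rcases mul_eq_zero.mp (hall j hj) with h | h
      · exact h
      · by_cases h0 : x j = 0
        · exact h0
        exfalso
        have hjpos : 0 < x j := lt_of_le_of_ne (hnn j) (Ne.symm h0)
        have hjS : j ∈ S := by simp [hS, hjpos]
        have : i < j := lt_of_le_of_ne (hiMin j hjS) (Ne.symm hji)
        have := hp this
        linarith [sub_eq_zero.mp h]
    have hxi1 : x i = 1 := by
      have := Fintype.sum_eq_single i hxj ▸ hsum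
      linarith [this]
    refine ⟨i, funext fun j => ?_⟩
    by_cases hji : j = i
    · simp [hji, hxi1]
    · simp [hji, hxj j hji]
  · rintro ⟨i, rfl⟩
    intro k
    by_cases hki : k = i
    · subst hki
      have : ∀ j ∈ Finset.univ.erase k, (if j = k then (1:ℝ) else 0) * (p k - p j) = 0 := by
        intro j hj
        simp [(Finset.mem_erase.mp hj).1]
      rw [Finset.sum_eq_zero this, mul_zero]
    · simp [hki]
end
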